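/- arXiv:2206.06484 — 3 statements merged into one kernel-verified Lean document; each statement's English description precedes it below -/
import Mathlib

section
/- For any measurable m : Ω → [0,1], the set of volumes v at which a_m(v) = v + 1 - ‖m‖₁ - 2∫₀^v F_m⁻¹(u) du is maximized equals the interval [F_m(1/2-), F_m(1/2)], where F_m(1/2-) denotes the left limit of F_m at 1/2. -/
/-!
Write `Q = F_m⁻¹`, `α = F_m(1/2-)` and `β = F_m(1/2)`. Then `a_m(w) - a_m(v) = ∫_v^w (1 - 2 Q)`,
and `Q < 1/2` on `[0, α)`, `Q = 1/2` on `(α, β]`, `Q > 1/2` on `(β, 1]`; so `a_m` increases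
strictly on `[0, α]`, is constant on `[α, β]` and decreases strictly on `[β, 1]`.
The strict inequalities on `Q` come from the left limit at `1/2` and the right-continuity of
`F_m`, which is the cdf of the law of `1 - m`.
-/

open MeasureTheory Set

noncomputable section

/-- Normalized Lebesgue measure on the unit cube `[0,1]^n`. -/
def cubeMeasure (n : ℕ) : Measure (Fin n → ℝ) :=
  volume.restrict (Set.univ.pi fun _ => Set.Icc (0:ℝ) 1)

/-- A segmentation: a measurable `{0,1}`-valued function on the cube. -/
def IsSeg {n : ℕ} (s : (Fin n → ℝ) → ℝ) : Prop :=
  Measurable s ∧ ∀ ω, s ω = 0 ∨ s ω = 1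

/-- A marginal function: a measurable `[0,1]`-valued function on the cube. -/
def IsMarg {n : ℕ} (m : (Fin n → ℝ) → ℝ) : Prop :=
  Measurable m ∧ ∀ ω, m ω ∈ Set.Icc (0:ℝ) 1

/-- The volume `‖f‖₁ = ∫ f dλ` (for nonnegative `f`). -/
def vol {n : ℕ} (f : (Fin n → ℝ) → ℝ) : ℝ := ∫ ω, f ω ∂(cubeMeasure n)

/-- `F_m(t) = λ({ω : 1 - m(ω) ≤ t})`. -/
def Fcdf {n : ℕ} (m : (Fin n → ℝ) → ℝ) (t : ℝ) : ℝ :=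
  ((cubeMeasure n) {ω | 1 - m ω ≤ t}).toReal

/-- The left limit `F_m(t-) = λ({ω : 1 - m(ω) < t})`. -/
def FcdfMinus {n : ℕ} (m : (Fin n → ℝ) → ℝ) (t : ℝ) : ℝ :=
  ((cubeMeasure n) {ω | 1 - m ω < t}).toReal

/-- The generalized inverse (quantile function) `F_m⁻¹(v) = inf{t ∈ [0,1] : F_m(t) ≥ v}`. -/
def Finv {n : ℕ} (m : (Fin n → ℝ) → ℝ) (v : ℝ) : ℝ :=
  sInf {t | t ∈ Set.Icc (0:ℝ) 1 ∧ v ≤ Fcdf m t}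

/-- The function `a_m`. -/
def aFun {n : ℕ} (m : (Fin n → ℝ) → ℝ) (v : ℝ) : ℝ :=
  v + 1 - vol m - 2 * ∫ u in (0:ℝ)..v, Finv m u

open ProbabilityTheory Function

section Argmax

variable {X Y : Type*} [LinearOrder X] [Preorder Y]

lemma argmaxOn_Icc_eq_Icc_of_unimodal {f : X → Y} {a b α β : X}
    (ha : a ≤ α) (hαβ : α ≤ β) (hb : β ≤ b)
    (hup : ∀ v ∈ Ico a α, f v < f α) (hflat : ∀ v ∈ Icc α β, f v = f β)
    (hdown : ∀ v ∈ Ioc β b, f v < f β) :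
    {v ∈ Icc a b | ∀ w ∈ Icc a b, f w ≤ f v} = Icc α β := by
  have hαf : f α = f β := hflat α ⟨le_rfl, hαβ⟩
  have hlt : ∀ v ∈ Icc a b, v ∉ Icc α β → f v < f β := by
    intro v hv hvαβ
    rcases lt_or_ge v α with h | h
    · exact hαf ▸ hup v ⟨hv.1, h⟩
    · exact hdown v ⟨lt_of_not_ge fun h' => hvαβ ⟨h, h'⟩, hv.2⟩
  ext v
  constructor
  · rintro ⟨hv, hmax⟩
    by_contra hvαβ
    exact (hlt v hv hvαβ).not_ge (hmax β ⟨ha.trans hαβ, hb⟩)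
  · intro hv
    refine ⟨⟨ha.trans hv.1, hv.2.trans hb⟩, fun w hw => (hflat v hv).symm ▸ ?_⟩
    by_cases hw' : w ∈ Icc α β
    · exact (hflat w hw').le
    · exact (hlt w hw hw').le

end Argmax

section UnitQuantile

def unitQuantile (F : ℝ → ℝ) (v : ℝ) : ℝ :=
  sInf {t | t ∈ Icc (0:ℝ) 1 ∧ v ≤ F t}

variable {F : ℝ → ℝ} {v t : ℝ}

lemma bddBelow_unitQuantile_set : BddBelow {t | t ∈ Icc (0:ℝ) 1 ∧ v ≤ F t} :=
  ⟨0, fun _ hs => hs.1.1⟩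

lemma nonempty_unitQuantile_set (hF : 1 ≤ F 1) (hv : v ≤ 1) :
    {t | t ∈ Icc (0:ℝ) 1 ∧ v ≤ F t}.Nonempty :=
  ⟨1, right_mem_Icc.2 zero_le_one, hv.trans hF⟩

lemma unitQuantile_le (ht : t ∈ Icc (0:ℝ) 1) (h : v ≤ F t) : unitQuantile F v ≤ t :=
  csInf_le bddBelow_unitQuantile_set ⟨ht, h⟩

lemma exists_lt_of_unitQuantile_lt (hF : 1 ≤ F 1) (hv : v ≤ 1) (h : unitQuantile F v < t) :
    ∃ s < t, v ≤ F s := by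
  obtain ⟨s, hs, hst⟩ := exists_lt_of_csInf_lt (nonempty_unitQuantile_set hF hv) h
  exact ⟨s, hst, hs.2⟩

lemma monotoneOn_unitQuantile (hF : 1 ≤ F 1) : MonotoneOn (unitQuantile F) (Iic 1) :=
  fun _ _ _ hb hab => csInf_le_csInf bddBelow_unitQuantile_set
    (nonempty_unitQuantile_set hF hb) fun _ ht => ⟨ht.1, hab.trans ht.2⟩

lemma intervalIntegrable_unitQuantile (hF : 1 ≤ F 1) {a b : ℝ} (ha : a ≤ 1) (hb : b ≤ 1) :
    IntervalIntegrable (unitQuantile F) volume a b :=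
  ((monotoneOn_unitQuantile hF).mono fun _ hx => hx.2.trans (sup_le ha hb)).intervalIntegrable

lemma lt_unitQuantile_of_lt (hmono : Monotone F) (hcont : ContinuousWithinAt F (Ioi t) t)
    (hF : 1 ≤ F 1) (hv : v ≤ 1) (h : F t < v) : t < unitQuantile F v := by
  by_contra! hle
  refine h.not_ge (ge_of_tendsto hcont (eventually_nhdsWithin_of_forall fun x hx => ?_))
  obtain ⟨s, hsx, hs⟩ := exists_lt_of_unitQuantile_lt hF hv (hle.trans_lt hx)
  exact hs.trans (hmono hsx.le)

lemma unitQuantile_lt_of_lt_leftLim (hmono : Monotone F) (ht : t ∈ Ioc (0:ℝ) 1)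
    (h : v < leftLim F t) : unitQuantile F v < t := by
  obtain ⟨s, hvs, hs⟩ := ((hmono.tendsto_leftLim t).eventually (eventually_gt_nhds h)).and
    (Ioo_mem_nhdsLT ht.1) |>.exists
  exact (unitQuantile_le ⟨hs.1.le, hs.2.le.trans ht.2⟩ hvs.le).trans_lt hs.2

lemma le_unitQuantile_of_leftLim_lt (hmono : Monotone F) (hF : 1 ≤ F 1) (hv : v ≤ 1)
    (h : leftLim F t < v) : t ≤ unitQuantile F v := by
  by_contra! hlt
  obtain ⟨s, hst, hs⟩ := exists_lt_of_unitQuantile_lt hF hv hlt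
  exact (hs.trans (hmono.le_leftLim hst)).not_gt h

end UnitQuantile

lemma add_sub_two_mul_integral_sub {g : ℝ → ℝ} {c v w : ℝ}
    (hv : IntervalIntegrable g volume 0 v) (hw : IntervalIntegrable g volume 0 w) :
    (w + c - 2 * ∫ u in 0..w, g u) - (v + c - 2 * ∫ u in 0..v, g u) =
      ∫ u in v..w, (1 - 2 * g u) := by
  rw [intervalIntegral.integral_sub intervalIntegrable_const ((hv.symm.trans hw).const_mul 2),
    intervalIntegral.integral_const_mul, intervalIntegral.integral_const,
    ← intervalIntegral.integral_interval_sub_left hw hv, smul_eq_mul]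
  ring

theorem argmaxOn_Icc_add_sub_two_mul_integral_unitQuantile (F : StieltjesFunction ℝ)
    (hF0 : 0 ≤ F 0) (hF1 : F 1 = 1) (c : ℝ) :
    {v ∈ Icc (0:ℝ) 1 | ∀ w ∈ Icc (0:ℝ) 1,
        w + c - 2 * ∫ u in 0..w, unitQuantile F u ≤ v + c - 2 * ∫ u in 0..v, unitQuantile F u} =
      Icc (leftLim F (1/2)) (F (1/2)) := by
  set Q := unitQuantile F
  have hQ {v w : ℝ} (hv : v ≤ 1) (hw : w ≤ 1) : IntervalIntegrable Q volume v w :=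
    intervalIntegrable_unitQuantile hF1.ge hv hw
  have hdiff {v w : ℝ} (hv : v ≤ 1) (hw : w ≤ 1) :
      (w + c - 2 * ∫ u in 0..w, Q u) - (v + c - 2 * ∫ u in 0..v, Q u) =
        ∫ u in v..w, (1 - 2 * Q u) :=
    add_sub_two_mul_integral_sub (hQ zero_le_one hv) (hQ zero_le_one hw)
  have hα : 0 ≤ leftLim F (1/2) := hF0.trans (F.mono.le_leftLim (by norm_num))
  have hαβ : leftLim F (1/2) ≤ F (1/2) := F.mono.leftLim_le le_rfl
  have hβ : F (1/2) ≤ 1 := (F.mono (by norm_num)).trans hF1.le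
  have hg {v w : ℝ} (hv : v ≤ 1) (hw : w ≤ 1) :
      IntervalIntegrable (fun u => 1 - 2 * Q u) volume v w :=
    intervalIntegrable_const.sub ((hQ hv hw).const_mul 2)
  refine argmaxOn_Icc_eq_Icc_of_unimodal hα hαβ hβ (fun v hv => ?_) (fun v hv => ?_)
    (fun v hv => ?_)
  · have hv1 : v ≤ 1 := hv.2.le.trans (hαβ.trans hβ)
    rw [← sub_pos, hdiff hv1 (hαβ.trans hβ)]
    refine intervalIntegral.intervalIntegral_pos_of_pos_on (hg hv1 (hαβ.trans hβ))
      (fun u hu => ?_) hv.2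
    have : Q u < 1/2 := unitQuantile_lt_of_lt_leftLim F.mono ⟨by norm_num, by norm_num⟩ hu.2
    linarith
  · rw [eq_comm, ← sub_eq_zero, hdiff (hv.2.trans hβ) hβ, intervalIntegral.integral_of_le hv.2]
    refine setIntegral_eq_zero_of_forall_eq_zero fun u hu => ?_
    have h1 : Q u ≤ 1/2 := unitQuantile_le ⟨by norm_num, by norm_num⟩ hu.2
    have h2 : 1/2 ≤ Q u :=
      le_unitQuantile_of_leftLim_lt F.mono hF1.ge (hu.2.trans hβ) (hv.1.trans_lt hu.1)
    linarith
  · rw [← sub_neg, hdiff hβ hv.2, ← neg_pos, ← intervalIntegral.integral_neg]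
    refine intervalIntegral.intervalIntegral_pos_of_pos_on (hg hβ hv.2).neg
      (fun u hu => ?_) hv.1
    have : 1/2 < Q u := lt_unitQuantile_of_lt F.mono
      ((F.right_continuous _).mono Ioi_subset_Ici_self) hF1.ge (hu.2.le.trans hv.2) hu.1
    linarith

section Marginal

variable {n : ℕ} {m : (Fin n → ℝ) → ℝ}

instance : IsProbabilityMeasure (cubeMeasure n) := by
  constructor
  rw [cubeMeasure, Measure.restrict_apply_univ, volume_pi_pi]
  simp [Real.volume_Icc]

lemma Fcdf_eq_cdf (hm : Measurable m) : Fcdf m = cdf ((cubeMeasure n).map fun ω => 1 - m ω) := by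
  have hX : Measurable fun ω => 1 - m ω := measurable_const.sub hm
  have := Measure.isProbabilityMeasure_map (μ := cubeMeasure n) hX.aemeasurable
  ext t
  rw [cdf_eq_real, map_measureReal_apply hX measurableSet_Iic]
  rfl

lemma FcdfMinus_eq_leftLim (hm : Measurable m) (t : ℝ) : FcdfMinus m t = leftLim (Fcdf m) t := by
  have hX : Measurable fun ω => 1 - m ω := measurable_const.sub hm
  set ν := (cubeMeasure n).map fun ω => 1 - m ω
  have := Measure.isProbabilityMeasure_map (μ := cubeMeasure n) hX.aemeasurable
  have hν : ν (Iio t) = ENNReal.ofReal (leftLim (cdf ν) t) := by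
    nth_rw 1 [← measure_cdf ν]
    rw [StieltjesFunction.measure_Iio _ (tendsto_cdf_atBot ν), sub_zero]
  have hpre : FcdfMinus m t = ν.real (Iio t) := (map_measureReal_apply hX measurableSet_Iio).symm
  rw [hpre, measureReal_def, hν, Fcdf_eq_cdf hm, ENNReal.toReal_ofReal
    ((cdf_nonneg ν (t - 1)).trans ((cdf ν).mono.le_leftLim (sub_one_lt t)))]

lemma Fcdf_one (hm : ∀ ω, 0 ≤ m ω) : Fcdf m 1 = 1 := by
  have h : {ω | 1 - m ω ≤ (1:ℝ)} = univ := eq_univ_of_forall fun ω => by simpa using hm ω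
  rw [Fcdf, h, measure_univ, ENNReal.toReal_one]

lemma Finv_eq_unitQuantile : Finv m = unitQuantile (Fcdf m) := rfl

end Marginal

theorem stmt5 {n : ℕ} {m : (Fin n → ℝ) → ℝ} (hm : IsMarg m) :
    {v ∈ Set.Icc (0:ℝ) 1 | ∀ w ∈ Set.Icc (0:ℝ) 1, aFun m w ≤ aFun m v} =
      Set.Icc (FcdfMinus m (1/2)) (Fcdf m (1/2)) := by
  have haFun : aFun m = fun v => v + (1 - vol m) - 2 * ∫ u in 0..v, unitQuantile (Fcdf m) u := by
    funext v
    rw [aFun, Finv_eq_unitQuantile]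
    ring
  have hF1 : Fcdf m 1 = 1 := Fcdf_one fun ω => (hm.2 ω).1
  rw [Fcdf_eq_cdf hm.1] at hF1
  rw [haFun, FcdfMinus_eq_leftLim hm.1, Fcdf_eq_cdf hm.1]
  exact argmaxOn_Icc_add_sub_two_mul_integral_unitQuantile _ (cdf_nonneg _ 0) hF1 _
end
end

section
/- For any measurable m : Ω → [0,1], the interval of optimal volumes for Accuracy, V^A = [F_m(1/2-), F_m(1/2)], is contained in [max{2‖m‖₁ - 1, 0}, min{2‖m‖₁, 1}]. -/
open MeasureTheory Set

noncomputable section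

/-!
Both bounds are Markov's inequality at level `1/2`: applied to `m` it gives
`λ(m ≥ 1/2) ≤ 2‖m‖₁`, and applied to `1 - m` it gives `λ(m ≤ 1/2) ≤ 2(1 - ‖m‖₁)`, i.e.
`2‖m‖₁ - 1 ≤ λ(m > 1/2)`.
-/

section

variable {Ω : Type*} [MeasurableSpace Ω] {μ : Measure Ω} {m : Ω → ℝ}

lemma measureReal_half_le_le_two_mul_integral (hm0 : 0 ≤ᵐ[μ] m) (hint : Integrable m μ) :
    μ.real {ω | 1 / 2 ≤ m ω} ≤ 2 * ∫ ω, m ω ∂μ := by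
  linarith [mul_meas_ge_le_integral_of_nonneg hm0 hint (1 / 2)]

lemma two_mul_integral_sub_one_le_measureReal_half_lt [IsProbabilityMeasure μ]
    (hm1 : ∀ᵐ ω ∂μ, m ω ≤ 1) (hint : Integrable m μ) :
    2 * ∫ ω, m ω ∂μ - 1 ≤ μ.real {ω | 1 / 2 < m ω} := by
  have hmarkov := mul_meas_ge_le_integral_of_nonneg (f := fun ω => 1 - m ω)
    (hm1.mono fun ω h => sub_nonneg.mpr h) ((integrable_const 1).sub hint) (1 / 2)
  have hcompl : {ω | 1 / 2 ≤ 1 - m ω} = {ω | 1 / 2 < m ω}ᶜ := by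
    ext ω; simp only [mem_ofPred_eq, mem_compl_iff, not_lt]; constructor <;> intro h <;> linarith
  rw [hcompl, probReal_compl_eq_one_sub₀ (nullMeasurableSet_lt aemeasurable_const hint.aemeasurable),
    integral_sub (integrable_const 1) hint, integral_const, probReal_univ, one_smul] at hmarkov
  linarith

end

instance isProbabilityMeasure_cubeMeasure (n : ℕ) : IsProbabilityMeasure (cubeMeasure n) :=
  ⟨by
    rw [cubeMeasure, Measure.restrict_apply_univ, volume_pi_pi]
    simp [Real.volume_Icc]⟩

lemma IsMarg.integrable {n : ℕ} {m : (Fin n → ℝ) → ℝ} (hm : IsMarg m) :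
    Integrable m (cubeMeasure n) :=
  .of_bound hm.1.aestronglyMeasurable 1 <| .of_forall fun ω => by
    rw [Real.norm_of_nonneg (hm.2 ω).1]; exact (hm.2 ω).2

lemma Fcdf_half {n : ℕ} (m : (Fin n → ℝ) → ℝ) :
    Fcdf m (1 / 2) = (cubeMeasure n).real {ω | 1 / 2 ≤ m ω} := by
  simp only [Fcdf, measureReal_def]
  congr 2; ext ω; simp only [mem_ofPred_eq]; constructor <;> intro h <;> linarith

lemma FcdfMinus_half {n : ℕ} (m : (Fin n → ℝ) → ℝ) :
    FcdfMinus m (1 / 2) = (cubeMeasure n).real {ω | 1 / 2 < m ω} := by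
  simp only [FcdfMinus, measureReal_def]
  congr 2; ext ω; simp only [mem_ofPred_eq]; constructor <;> intro h <;> linarith

theorem stmt6 {n : ℕ} {m : (Fin n → ℝ) → ℝ} (hm : IsMarg m) :
    Set.Icc (FcdfMinus m (1/2)) (Fcdf m (1/2)) ⊆
      Set.Icc (max (2 * vol m - 1) 0) (min (2 * vol m) 1) := by
  have hint := hm.integrable
  rintro v ⟨hlower, hupper⟩
  rw [FcdfMinus_half] at hlower
  rw [Fcdf_half] at hupper
  constructor
  · exact max_le
      ((two_mul_integral_sub_one_le_measureReal_half_lt (.of_forall fun ω => (hm.2 ω).2) hint).trans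
        hlower)
      (measureReal_nonneg.trans hlower)
  · exact le_min
      (hupper.trans (measureReal_half_le_le_two_mul_integral (.of_forall fun ω => (hm.2 ω).1) hint))
      (hupper.trans measureReal_le_one)
end
end

section
/- For any measurable m : Ω → [0,1] and t ∈ (0,1], a segmentation s belongs to ∪_{v ∈ [F_m(t-), F_m(t)]} S_{m,v} if and only if 1{m(ω) > 1-t} ≤ s(ω) ≤ 1{m(ω) ≥ 1-t} for λ-almost every ω. -/
open MeasureTheory Set

noncomputable section

/-- The class `S_{m,v}`. -/
def Smv {n : ℕ} (m : (Fin n → ℝ) → ℝ) (v : ℝ) (s : (Fin n → ℝ) → ℝ) : Prop :=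
  IsSeg s ∧ vol s = v ∧
    (∫ ω in {ω | m ω < 1 - Finv m v}, s ω ∂(cubeMeasure n)) = 0 ∧
    (∫ ω in {ω | m ω > 1 - Finv m v}, (1 - s ω) ∂(cubeMeasure n)) = 0

/-!
`S_{m,v}` consists of the segmentations of volume `v` lying a.e. between the strict superlevel set
`{m > 1 - F⁻¹(v)}` and the superlevel set `{m ≥ 1 - F⁻¹(v)}`, and `v ≤ F(t)` forces `F⁻¹(v) ≤ t`.
Such a sandwich can be moved between the levels `1 - F⁻¹(v)` and `1 - t`, because a set that is
a.e. contained in another one and at least as large is a.e. equal to it. Raising the level up to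
`1 - F⁻¹(v)` uses all levels strictly below it, i.e. the infimum in `F⁻¹`, through rational levels.
-/

section Superlevel

variable {α : Type*} [MeasurableSpace α] {μ : Measure α} {g : α → ℝ} {a b : ℝ} {S : Set α}

def IsAESuperlevelSet (μ : Measure α) (g : α → ℝ) (a : ℝ) (S : Set α) : Prop :=
  {x | a < g x} ≤ᵐ[μ] S ∧ S ≤ᵐ[μ] {x | a ≤ g x}

theorem setIntegral_indicator_one_eq_zero_iff [IsFiniteMeasure μ] (T : Set α)
    (hS : MeasurableSet S) :
    ∫ x in T, S.indicator (1 : α → ℝ) x ∂μ = 0 ↔ μ (S ∩ T) = 0 := by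
  rw [integral_indicator_one hS, measureReal_restrict_apply hS, measureReal_eq_zero_iff]

theorem ae_le_setOf_le_of_forall_lt (h : ∀ b' < b, S ≤ᵐ[μ] {x | b' ≤ g x}) :
    S ≤ᵐ[μ] {x | b ≤ g x} := by
  have h_rat : ∀ᵐ x ∂μ, ∀ q : ℚ, (q : ℝ) < b → x ∈ S → (q : ℝ) ≤ g x := by
    rw [ae_all_iff]
    intro q
    by_cases hq : (q : ℝ) < b
    · filter_upwards [h q hq] with x hx using fun _ => hx
    · exact Filter.Eventually.of_forall fun x hq' => absurd hq' hq
  filter_upwards [h_rat] with x hx hxS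
  exact le_of_forall_rat_lt_imp_le fun q hq => hx q hq hxS

namespace IsAESuperlevelSet

theorem measure_setOf_lt_le (h : IsAESuperlevelSet μ g a S) : μ {x | a < g x} ≤ μ S :=
  measure_mono_ae h.1

theorem measure_le_measure_setOf_le (h : IsAESuperlevelSet μ g a S) : μ S ≤ μ {x | a ≤ g x} :=
  measure_mono_ae h.2

theorem lower_level [IsFiniteMeasure μ] (h : IsAESuperlevelSet μ g b S) (hab : a ≤ b)
    (hμ : μ {x | a < g x} ≤ μ S) (hS : NullMeasurableSet S μ) : IsAESuperlevelSet μ g a S := by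
  refine ⟨?_, h.2.trans (Filter.Eventually.of_forall fun x (hx : b ≤ g x) => hab.trans hx)⟩
  rcases hab.eq_or_lt with rfl | hab
  · exact h.1
  · have hS_sub : S ≤ᵐ[μ] {x | a < g x} :=
      h.2.trans (Filter.Eventually.of_forall fun x (hx : b ≤ g x) => hab.trans_le hx)
    exact (ae_eq_of_ae_subset_of_measure_ge hS_sub hμ hS (measure_ne_top _ _)).symm.le

/-- Each `{b' ≤ g}` with `a < b' < b` lies in `{a < g} ≤ᵐ S` and is at least as large as `S`,
hence is a.e. equal to `S`. -/
theorem raise_level [IsFiniteMeasure μ] (h : IsAESuperlevelSet μ g a S) (hab : a ≤ b)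
    (hg : Measurable g) (hμ : ∀ b' ∈ Ioo a b, μ S ≤ μ {x | b' ≤ g x}) :
    IsAESuperlevelSet μ g b S := by
  refine ⟨Filter.EventuallyLE.trans
    (LE.le.eventuallyLE fun x (hx : b < g x) => hab.trans_lt hx) h.1,
    ae_le_setOf_le_of_forall_lt fun b' hb' => ?_⟩
  rcases le_or_gt b' a with hb'a | hab'
  · exact h.2.trans (Filter.Eventually.of_forall fun x (hx : a ≤ g x) => hb'a.trans hx)
  · have h_sub : {x | b' ≤ g x} ≤ᵐ[μ] S :=
      Filter.EventuallyLE.trans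
        (LE.le.eventuallyLE fun x (hx : b' ≤ g x) => hab'.trans_le hx) h.1
    exact (ae_eq_of_ae_subset_of_measure_ge h_sub (hμ b' ⟨hab', hb'⟩)
      (measurableSet_le measurable_const hg).nullMeasurableSet (measure_ne_top _ _)).symm.le

end IsAESuperlevelSet

end Superlevel

instance (n : ℕ) : IsFiniteMeasure (cubeMeasure n) := by
  constructor
  rw [cubeMeasure, Measure.restrict_apply_univ, volume_pi_pi]
  simp [Real.volume_Icc]

section Cube

variable {n : ℕ} {m s : (Fin n → ℝ) → ℝ}

theorem IsSeg.measurableSet (hs : IsSeg s) : MeasurableSet {ω | s ω = 1} :=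
  hs.1 (measurableSet_singleton 1)

theorem IsSeg.eq_indicator (hs : IsSeg s) : s = {ω | s ω = 1}.indicator 1 := by
  funext ω
  rcases hs.2 ω with h | h <;> simp [h]

theorem IsSeg.one_sub_eq_indicator (hs : IsSeg s) :
    (fun ω => 1 - s ω) = {ω | s ω = 1}ᶜ.indicator 1 := by
  funext ω
  rcases hs.2 ω with h | h <;> simp [h]

theorem IsSeg.ae_indicator_le_iff (hs : IsSeg s) {μ : Measure (Fin n → ℝ)}
    {U W : Set (Fin n → ℝ)} :
    (∀ᵐ ω ∂μ, U.indicator (fun _ => (1 : ℝ)) ω ≤ s ω ∧ s ω ≤ W.indicator (fun _ => 1) ω) ↔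
      U ≤ᵐ[μ] {ω | s ω = 1} ∧ {ω | s ω = 1} ≤ᵐ[μ] W := by
  have key : ∀ ω, (U.indicator (fun _ => (1 : ℝ)) ω ≤ s ω ↔ (ω ∈ U → s ω = 1)) ∧
      (s ω ≤ W.indicator (fun _ => 1) ω ↔ (s ω = 1 → ω ∈ W)) := by
    intro ω
    rcases hs.2 ω with h | h <;> by_cases hU : ω ∈ U <;> by_cases hW : ω ∈ W <;> simp [h, hU, hW]
  simp only [key, Filter.eventually_and]
  rfl

theorem smv_iff (hs : IsSeg s) {v : ℝ} :
    Smv m v s ↔ (cubeMeasure n).real {ω | s ω = 1} = v ∧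
      IsAESuperlevelSet (cubeMeasure n) m (1 - Finv m v) {ω | s ω = 1} := by
  set b := 1 - Finv m v
  set S := {ω | s ω = 1}
  have h_vol : vol s = (cubeMeasure n).real S := by
    rw [vol, hs.eq_indicator, integral_indicator_one hs.measurableSet]
  have h_low : ∫ ω in {ω | m ω < b}, s ω ∂(cubeMeasure n) = 0 ↔
      S ≤ᵐ[cubeMeasure n] {ω | b ≤ m ω} := by
    rw [ae_le_set, hs.eq_indicator, setIntegral_indicator_one_eq_zero_iff _ hs.measurableSet]
    simp only [sdiff_eq, compl_ofPred, not_le]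
    rfl
  have h_high : ∫ ω in {ω | m ω > b}, (1 - s ω) ∂(cubeMeasure n) = 0 ↔
      {ω | b < m ω} ≤ᵐ[cubeMeasure n] S := by
    rw [ae_le_set, hs.one_sub_eq_indicator,
      setIntegral_indicator_one_eq_zero_iff _ hs.measurableSet.compl, inter_comm, sdiff_eq]
  rw [Smv, h_vol, h_low, h_high]
  exact ⟨fun h => ⟨h.2.1, h.2.2.2, h.2.2.1⟩, fun h => ⟨hs, h.1, h.2.2, h.2.1⟩⟩

theorem Fcdf_eq (m : (Fin n → ℝ) → ℝ) (t : ℝ) :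
    Fcdf m t = (cubeMeasure n).real {ω | 1 - t ≤ m ω} := by
  simp only [Fcdf, sub_le_comm, measureReal_def]

theorem FcdfMinus_eq (m : (Fin n → ℝ) → ℝ) (t : ℝ) :
    FcdfMinus m t = (cubeMeasure n).real {ω | 1 - t < m ω} := by
  simp only [FcdfMinus, sub_lt_comm, measureReal_def]

theorem Fcdf_mono (m : (Fin n → ℝ) → ℝ) : Monotone (Fcdf m) :=
  fun _ _ hab => measureReal_mono fun _ (h : _ ≤ _) => h.trans hab

theorem Finv_le {t v : ℝ} (ht : t ∈ Icc (0 : ℝ) 1) (hv : v ≤ Fcdf m t) : Finv m v ≤ t :=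
  csInf_le ⟨0, fun _ hx => hx.1.1⟩ ⟨ht, hv⟩

theorem le_Fcdf_of_Finv_lt {t u v : ℝ} (ht : t ∈ Icc (0 : ℝ) 1) (hv : v ≤ Fcdf m t)
    (hu : Finv m v < u) : v ≤ Fcdf m u := by
  obtain ⟨u', ⟨-, hu'⟩, hu'u⟩ :=
    exists_lt_of_csInf_lt (s := {t | t ∈ Icc 0 1 ∧ v ≤ Fcdf m t}) ⟨t, ht, hv⟩ hu
  exact hu'.trans (Fcdf_mono m hu'u.le)

end Cube

theorem stmt15 {n : ℕ} {m : (Fin n → ℝ) → ℝ} (hm : IsMarg m)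
    {t : ℝ} (ht : t ∈ Set.Ioc (0:ℝ) 1)
    {s : (Fin n → ℝ) → ℝ} (hs : IsSeg s) :
    (∃ v ∈ Set.Icc (FcdfMinus m t) (Fcdf m t), Smv m v s) ↔
      (∀ᵐ ω ∂(cubeMeasure n),
        Set.indicator {ω | 1 - t < m ω} (fun _ => (1:ℝ)) ω ≤ s ω ∧
        s ω ≤ Set.indicator {ω | 1 - t ≤ m ω} (fun _ => (1:ℝ)) ω) := by
  set μ := cubeMeasure n
  set S := {ω | s ω = 1}
  have ht : t ∈ Icc (0 : ℝ) 1 := Ioc_subset_Icc_self ht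
  have h_real_le {A B : Set (Fin n → ℝ)} : μ.real A ≤ μ.real B ↔ μ A ≤ μ B :=
    ENNReal.toReal_le_toReal (measure_ne_top _ _) (measure_ne_top _ _)
  rw [hs.ae_indicator_le_iff, ← IsAESuperlevelSet]
  simp_rw [smv_iff hs]
  constructor
  · rintro ⟨v, ⟨hv_ge, hv_le⟩, rfl, hS⟩
    refine hS.lower_level ?_ ?_ hs.measurableSet.nullMeasurableSet
    · linarith [Finv_le ht hv_le]
    · rwa [FcdfMinus_eq, h_real_le] at hv_ge
  · intro hS
    have hv_le : μ.real S ≤ Fcdf m t := by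
      rw [Fcdf_eq, h_real_le]
      exact hS.measure_le_measure_setOf_le
    refine ⟨μ.real S, ⟨?_, hv_le⟩, rfl, hS.raise_level ?_ hm.1 fun b hb => ?_⟩
    · rw [FcdfMinus_eq, h_real_le]; exact hS.measure_setOf_lt_le
    · linarith [Finv_le ht hv_le]
    · have := le_Fcdf_of_Finv_lt ht hv_le (u := 1 - b) (by linarith [hb.2])
      rwa [Fcdf_eq, sub_sub_cancel, h_real_le] at this
end
end
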